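/- Let G_k be as above and let z_{k-1}* be the smallest positive solution of G_{k-1}(z) = 1. Then z_{k-1}* is a simple pole of the rational function G_k, with residue lim_{z→z_{k-1}*} (z - z_{k-1}*) G_k(z) = z_{k-1}* / (−G_{k-1}'(z_{k-1}*)), and G_{k-1}'(z_{k-1}*) ≥ k − 1 > 0. -/

import Mathlib

/-!
Below the first root `z*` of `G (k-1) = 1` every `G j` with `j < k` stays below `1`, so each
step `G (j+1) = G j + z / (1 - G j)` adds at least `z`. Passing to the limit at `z*` gives
`G j z* ≤ 1 - (k - 1 - j) z* < 1` for `j < k - 1`; the same step inequality for derivatives gives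
`G (k-1)' (z*) ≥ k - 1`. Since `1 - G (k-1) z ~ -G (k-1)'(z*) (z - z*)`, the term
`z / (1 - G (k-1) z)` has a simple pole at `z*` with the stated residue.
-/

open Real Finset Filter

/-- The generating functions `G_k` of planted plane trees with decreasing
labels from `{1, ..., k}`, viewed as real functions: `G 1 z = z` and
`G k z = G (k-1) z + z / (1 - G (k-1) z)` for `k ≥ 2`.  (`G 0` is junk.) -/
noncomputable def G : ℕ → ℝ → ℝ
  | 0, z => z
  | 1, z => z
  | (k + 2), z => G (k + 1) z + z / (1 - G (k + 1) z)

open Set Topology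

lemma G_succ {m : ℕ} (hm : 1 ≤ m) (z : ℝ) : G (m + 1) z = G m z + z / (1 - G m z) := by
  obtain ⟨i, rfl⟩ := Nat.exists_eq_add_of_le' hm
  rfl

lemma G_apply_zero (m : ℕ) : G m 0 = 0 := by
  induction m with
  | zero => rfl
  | succ i ih =>
    rcases Nat.eq_zero_or_pos i with rfl | hi
    · rfl
    · rw [G_succ hi, ih, zero_div, add_zero]

/-- With the junk value `w / 0 = 0`, a root of `G j = 1` is a root of every later `G m = 1`. -/
lemma G_eq_one_of_le {j m : ℕ} {w : ℝ} (hjm : j ≤ m) (h : G j w = 1) : G m w = 1 := by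
  induction m, hjm using Nat.le_induction with
  | base => exact h
  | succ m _ ih =>
    rcases Nat.eq_zero_or_pos m with rfl | hm
    · exact ih
    · rw [G_succ hm, ih, sub_self, div_zero, add_zero]

lemma continuousOn_G {m : ℕ} {s : Set ℝ} (h : ∀ j, 1 ≤ j → j < m → ∀ w ∈ s, G j w ≠ 1) :
    ContinuousOn (G m) s := by
  induction m with
  | zero => exact continuousOn_id
  | succ i ih =>
    rcases Nat.eq_zero_or_pos i with rfl | hi
    · exact continuousOn_id
    have hGi : ContinuousOn (G i) s := ih fun j hj hji => h j hj (by omega)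
    have hden : ∀ w ∈ s, 1 - G i w ≠ 0 := fun w hw =>
      sub_ne_zero.mpr (h i hi (by omega) w hw).symm
    rw [show G (i + 1) = fun z => G i z + z / (1 - G i z) from funext (G_succ hi)]
    exact hGi.add (continuousOn_id.div (continuousOn_const.sub hGi) hden)

lemma hasDerivAt_G_succ {m : ℕ} {d z : ℝ} (hm : 1 ≤ m) (hd : HasDerivAt (G m) d z)
    (h1 : G m z ≠ 1) :
    HasDerivAt (G (m + 1)) (d + (1 - G m z + z * d) / (1 - G m z) ^ 2) z := by
  have hden : 1 - G m z ≠ 0 := sub_ne_zero.mpr h1.symm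
  have hquot : HasDerivAt (fun w => w / (1 - G m w))
      ((1 * (1 - G m z) - z * (0 - d)) / (1 - G m z) ^ 2) z :=
    (hasDerivAt_id z).div ((hasDerivAt_const z 1).sub hd) hden
  rw [show G (m + 1) = G m + fun w => w / (1 - G m w) from funext (G_succ hm)]
  exact (hd.add hquot).congr_deriv (by ring)

section BelowOne

variable {m : ℕ} {w : ℝ}

lemma G_nonneg (hw : 0 ≤ w) (h : ∀ i, 1 ≤ i → i < m → G i w < 1) : 0 ≤ G m w := by
  induction m with
  | zero => exact hw
  | succ i ih =>
    rcases Nat.eq_zero_or_pos i with rfl | hi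
    · exact hw
    have hGi : 0 ≤ G i w := ih fun j hj hji => h j hj (by omega)
    rw [G_succ hi]
    exact add_nonneg hGi (div_nonneg hw (sub_nonneg.mpr (h i hi (by omega)).le))

lemma G_add_le_G_succ (hm : 1 ≤ m) (hw : 0 ≤ w) (h0 : 0 ≤ G m w) (h1 : G m w < 1) :
    G m w + w ≤ G (m + 1) w := by
  rw [G_succ hm]
  gcongr
  exact le_div_self hw (sub_pos.mpr h1) (by linarith)

lemma G_add_sub_mul_le {j : ℕ} (hw : 0 ≤ w) (h : ∀ i, 1 ≤ i → i < m → G i w < 1)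
    (hj : 1 ≤ j) (hjm : j ≤ m) : G j w + ((m : ℝ) - j) * w ≤ G m w := by
  induction m, hjm using Nat.le_induction with
  | base => simp
  | succ m hjm ih =>
    have h' : ∀ i, 1 ≤ i → i < m → G i w < 1 := fun i hi him => h i hi (by omega)
    have hstep := G_add_le_G_succ (hj.trans hjm) hw (G_nonneg hw h') (h m (by omega) (by omega))
    push_cast
    linarith [ih h']

lemma exists_hasDerivAt_G_ge (hw : 0 ≤ w) (h : ∀ i, 1 ≤ i → i < m → G i w < 1) (hm : 1 ≤ m) :
    ∃ d, HasDerivAt (G m) d w ∧ (m : ℝ) ≤ d := by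
  induction m, hm using Nat.le_induction with
  | base => exact ⟨1, hasDerivAt_id w, by simp⟩
  | succ m hm ih =>
    have h' : ∀ i, 1 ≤ i → i < m → G i w < 1 := fun i hi him => h i hi (by omega)
    obtain ⟨d, hd, hmd⟩ := ih h'
    have h0 := G_nonneg hw h'
    have h1 := h m hm (by omega)
    refine ⟨_, hasDerivAt_G_succ hm hd h1.ne, ?_⟩
    have hpos : 0 < 1 - G m w := sub_pos.mpr h1
    have hd0 : 0 ≤ d := by linarith [(Nat.one_le_cast.mpr hm : (1 : ℝ) ≤ m)]
    have hterm : 1 ≤ (1 - G m w + w * d) / (1 - G m w) ^ 2 := by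
      rw [le_div_iff₀ (by positivity)]
      nlinarith [mul_nonneg hw hd0]
    push_cast
    linarith

end BelowOne

section FirstRoot

variable {n : ℕ} {z : ℝ} (hz : IsLeast {z : ℝ | 0 < z ∧ G n z = 1} z)
include hz

lemma G_ne_one_of_lt_first_root {j : ℕ} {w : ℝ} (hjn : j ≤ n) (hw : 0 ≤ w) (hwz : w < z) :
    G j w ≠ 1 := by
  intro he
  rcases hw.eq_or_lt with rfl | hw
  · rw [G_apply_zero] at he
    exact zero_ne_one he
  · exact hwz.not_ge (hz.2 ⟨hw, G_eq_one_of_le hjn he⟩)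

lemma G_lt_one_of_lt_first_root {m : ℕ} {w : ℝ} (hmn : m ≤ n) (hw : 0 < w) (hwz : w < z) :
    G m w < 1 := by
  have hcont : ContinuousOn (G m) (Icc 0 w) := continuousOn_G fun j _ hjm v hv =>
    G_ne_one_of_lt_first_root hz (by omega) hv.1 (hv.2.trans_lt hwz)
  by_contra! hge
  obtain ⟨c, hc, hc1⟩ := intermediate_value_Icc hw.le hcont
    (show (1 : ℝ) ∈ Icc (G m 0) (G m w) from ⟨by rw [G_apply_zero]; exact zero_le_one, hge⟩)
  exact G_ne_one_of_lt_first_root hz hmn hc.1 (hc.2.trans_lt hwz) hc1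

lemma G_lt_one_at_first_root {j : ℕ} (hj : 1 ≤ j) (hjn : j < n) : G j z < 1 := by
  induction j using Nat.strong_induction_on with
  | _ j ih =>
  have hz0 : 0 < z := hz.1.1
  have hcont : ContinuousOn (G j) (Ioc 0 z) := continuousOn_G fun i hi hij w hw =>
    hw.2.eq_or_lt.elim (fun hwz => hwz ▸ (ih i hij hi (by omega)).ne)
      (G_ne_one_of_lt_first_root hz (by omega) hw.1.le)
  have hleft : Tendsto (G j) (𝓝[Ioo 0 z] z) (𝓝 (G j z)) :=
    (hcont z ⟨hz0, le_rfl⟩).mono Ioo_subset_Ioc_self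
  have : (𝓝[Ioo 0 z] z).NeBot := right_nhdsWithin_Ioo_neBot hz0
  -- Below `z`, `G j w + (n - j) w ≤ G n w < 1`; let `w → z⁻`.
  have hle : G j z ≤ 1 - ((n : ℝ) - j) * z := by
    refine le_of_tendsto_of_tendsto hleft
      ((Continuous.tendsto (f := fun w => 1 - ((n : ℝ) - j) * w) (by fun_prop) z).mono_left
        nhdsWithin_le_nhds) ?_
    filter_upwards [self_mem_nhdsWithin] with w hw
    have hbelow : ∀ i, 1 ≤ i → i < n → G i w < 1 := fun i _ hin =>
      G_lt_one_of_lt_first_root hz hin.le hw.1 hw.2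
    linarith [G_add_sub_mul_le hw.1.le hbelow hj hjn.le,
      G_lt_one_of_lt_first_root hz le_rfl hw.1 hw.2]
  have hgap : (1 : ℝ) ≤ (n : ℝ) - j := by
    rw [le_sub_iff_add_le, add_comm]
    exact_mod_cast hjn
  nlinarith

end FirstRoot

lemma tendsto_sub_mul_add_div_one_sub {f : ℝ → ℝ} {d z : ℝ} (hd : HasDerivAt f d z)
    (hf : f z = 1) (hd0 : d ≠ 0) :
    Tendsto (fun w => (w - z) * (f w + w / (1 - f w))) (𝓝[≠] z) (𝓝 (z / -d)) := by
  have hslope : Tendsto (fun w => (1 - f w) / (w - z)) (𝓝[≠] z) (𝓝 (-d)) :=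
    (hasDerivAt_iff_tendsto_slope.mp hd).neg.congr fun w => by
      rw [slope_def_field, hf, ← neg_div, neg_sub]
  have hrecip : Tendsto (fun w => (w - z) / (1 - f w)) (𝓝[≠] z) (𝓝 (-d)⁻¹) :=
    (hslope.inv₀ (neg_ne_zero.mpr hd0)).congr fun w => inv_div _ _
  have hid : Tendsto (fun w : ℝ => w) (𝓝[≠] z) (𝓝 z) :=
    tendsto_nhdsWithin_of_tendsto_nhds tendsto_id
  have hsub : Tendsto (fun w : ℝ => w - z) (𝓝[≠] z) (𝓝 0) := by
    simpa using hid.sub_const z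
  have hf1 : Tendsto f (𝓝[≠] z) (𝓝 1) :=
    hf ▸ tendsto_nhdsWithin_of_tendsto_nhds hd.continuousAt.tendsto
  have hsum := (hsub.mul hf1).add (hid.mul hrecip)
  rw [zero_mul, zero_add, ← div_eq_mul_inv] at hsum
  exact hsum.congr fun w => by ring

lemma tendsto_abs_atTop_of_tendsto_sub_mul {g : ℝ → ℝ} {z r : ℝ}
    (hg : Tendsto (fun w => (w - z) * g w) (𝓝[≠] z) (𝓝 r)) (hr : r ≠ 0) :
    Tendsto (fun w => |g w|) (𝓝[≠] z) atTop := by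
  have hinv : Tendsto (fun w => |w - z|⁻¹) (𝓝[≠] z) atTop := by
    refine tendsto_inv_nhdsGT_zero.comp (tendsto_nhdsWithin_iff.mpr ⟨?_, ?_⟩)
    · simpa using (tendsto_nhdsWithin_of_tendsto_nhds (tendsto_id (x := 𝓝 z))).sub_const z |>.abs
    · filter_upwards [self_mem_nhdsWithin] with w hw
      exact abs_pos.mpr (sub_ne_zero.mpr hw)
  refine (hg.abs.pos_mul_atTop (abs_pos.mpr hr) hinv).congr' ?_
  filter_upwards [self_mem_nhdsWithin] with w hw
  have hne : |w - z| ≠ 0 := abs_ne_zero.mpr (sub_ne_zero.mpr hw)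
  rw [abs_mul, mul_comm |w - z|, mul_assoc, mul_inv_cancel₀ hne, mul_one]

theorem stmt8 (k : ℕ) (hk : 2 ≤ k) (zk : ℝ)
    (hzk : IsLeast {z : ℝ | 0 < z ∧ G (k - 1) z = 1} zk) :
    -- `zk` is a pole of `G k` ...
    Tendsto (fun z => |G k z|) (nhdsWithin zk {zk}ᶜ) atTop ∧
    -- ... which is simple, with the indicated residue ...
    Tendsto (fun z => (z - zk) * G k z) (nhdsWithin zk {zk}ᶜ)
      (nhds (zk / (-(deriv (G (k - 1)) zk)))) ∧
    -- ... and the derivative appearing in the residue satisfies: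
    (k : ℝ) - 1 ≤ deriv (G (k - 1)) zk ∧ (0 : ℝ) < (k : ℝ) - 1 := by
  obtain ⟨n, hn, rfl⟩ : ∃ n, 1 ≤ n ∧ k = n + 1 := ⟨k - 1, by omega, by omega⟩
  simp only [Nat.add_sub_cancel, Nat.cast_add, Nat.cast_one, add_sub_cancel_right] at hzk ⊢
  obtain ⟨d, hd, hnd⟩ := exists_hasDerivAt_G_ge hzk.1.1.le
    (fun i hi hin => G_lt_one_at_first_root hzk hi hin) hn
  have hn1 : (1 : ℝ) ≤ n := Nat.one_le_cast.mpr hn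
  have hres : Tendsto (fun z => (z - zk) * G (n + 1) z) (𝓝[≠] zk) (𝓝 (zk / -d)) := by
    simpa only [G_succ hn] using tendsto_sub_mul_add_div_one_sub hd hzk.1.2 (by linarith)
  rw [hd.deriv]
  refine ⟨tendsto_abs_atTop_of_tendsto_sub_mul hres ?_, hres, hnd, by linarith⟩
  exact div_ne_zero hzk.1.1.ne' (neg_ne_zero.mpr (by linarith))
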